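/- arXiv:2603.22023 — 4 statements merged into one kernel-verified Lean document; each statement's English description precedes it below -/
import Mathlib

section
/- Let M be the block matrix [[A, p·J_{m,n}], [q·J_{n,m}, B]] where A ∈ R^{m×m} and B ∈ R^{n×n} are invertible, J_{m,n} is the all-ones m×n matrix, and p, q are real scalars. Then det M = det A · det B − p·q · (sum of all entries of adj A) · (sum of all entries of adj B). -/
/-!
The off-diagonal blocks have rank one, so the Schur complement `B - C A⁻¹ D` is a rank-one
perturbation of `B`, whose determinant the matrix determinant lemma gives. Multiplying the
inverses by the determinants turns them into adjugates.
-/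

namespace Matrix

variable {m n α : Type*} [Fintype m] [Fintype n] [CommRing α]

theorem one_dotProduct_mulVec_const (M : Matrix m n α) (c : α) :
    1 ⬝ᵥ M *ᵥ (fun _ => c) = c * ∑ i, ∑ j, M i j := by
  simp [dotProduct, mulVec, Finset.mul_sum, mul_comm]

variable [DecidableEq m] [DecidableEq n]

theorem det_smul_inv_eq_adjugate {A : Matrix m m α} (hA : IsUnit A.det) :
    A.det • A⁻¹ = A.adjugate := by
  rw [inv_def, smul_smul, Ring.mul_inverse_cancel _ hA, one_smul]

theorem det_add_vecMulVec {B : Matrix n n α} (hB : IsUnit B.det) (w v : n → α) :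
    (B + vecMulVec w v).det = B.det + v ⬝ᵥ B.adjugate *ᵥ w := by
  rw [vecMulVec_eq Unit, det_add_replicateCol_mul_replicateRow hB,
    det_unique (1 + _ : Matrix Unit Unit α), add_apply, one_apply_eq, Matrix.mul_assoc,
    ← replicateCol_mulVec, replicateRow_mul_replicateCol_apply, ← det_smul_inv_eq_adjugate hB,
    smul_mulVec, dotProduct_smul, smul_eq_mul]
  ring

theorem det_fromBlocks_vecMulVec {A : Matrix m m α} {B : Matrix n n α}
    (hA : IsUnit A.det) (hB : IsUnit B.det) (u z : m → α) (v w : n → α) :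
    (fromBlocks A (vecMulVec u v) (vecMulVec w z) B).det
      = A.det * B.det - (z ⬝ᵥ A.adjugate *ᵥ u) * (v ⬝ᵥ B.adjugate *ᵥ w) := by
  let := invertibleOfIsUnitDet A hA
  have hschur : vecMulVec w z * A⁻¹ * vecMulVec u v = vecMulVec w ((z ⬝ᵥ A⁻¹ *ᵥ u) • v) := by
    rw [vecMulVec_mul, vecMulVec_mul_vecMulVec, dotProduct_mulVec]
  rw [det_fromBlocks₁₁, invOf_eq_nonsing_inv, hschur, sub_eq_add_neg, ← vecMulVec_neg,
    det_add_vecMulVec hB, neg_dotProduct, smul_dotProduct, ← det_smul_inv_eq_adjugate hA,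
    smul_mulVec, dotProduct_smul, smul_eq_mul, smul_eq_mul]
  ring

end Matrix

theorem stmt_2 (m n : ℕ) (A : Matrix (Fin m) (Fin m) ℝ) (B : Matrix (Fin n) (Fin n) ℝ)
    (p q : ℝ) (hA : IsUnit A.det) (hB : IsUnit B.det) :
    (Matrix.fromBlocks A
      (Matrix.of fun (_ : Fin m) (_ : Fin n) => p)
      (Matrix.of fun (_ : Fin n) (_ : Fin m) => q) B).det
      = A.det * B.det
        - p * q * (∑ i, ∑ j, A.adjugate i j) * (∑ i, ∑ j, B.adjugate i j) := by
  have hp : Matrix.of (fun (_ : Fin m) (_ : Fin n) => p) = Matrix.vecMulVec (fun _ => p) 1 := by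
    ext; simp
  have hq : Matrix.of (fun (_ : Fin n) (_ : Fin m) => q) = Matrix.vecMulVec (fun _ => q) 1 := by
    ext; simp
  rw [hp, hq, Matrix.det_fromBlocks_vecMulVec hA hB, Matrix.one_dotProduct_mulVec_const,
    Matrix.one_dotProduct_mulVec_const]
  ring
end

section
/- Let T_n be the 2n×2n block tridiagonal matrix with 2×2 diagonal blocks A_i = [[a_i, b_i],[c_i, d_i]], superdiagonal blocks p_i·J_2 and subdiagonal blocks q_i·J_2 (J_2 the all-ones 2×2 matrix), all other blocks zero, with each A_i invertible. Let g_n = det T_n and t_i = a_i + d_i − b_i − c_i. Then for n ≥ 3, g_n = det(A_n)·g_{n-1} − p_{n-1}·q_{n-1}·t_n·t_{n-1}·g_{n-2}, with g_1 = a_1 d_1 − b_1 c_1 and g_2 = det A_1 · det A_2 − p_1 q_1 t_1 t_2. -/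
/-- The `2n × 2n` block tridiagonal matrix with `2 × 2` diagonal blocks
`A_i = !![a i, b i; c i, d i]`, superdiagonal blocks `p i • J₂` and
subdiagonal blocks `q i • J₂` (indexed as `Fin n × Fin 2`). -/
def blockTridiag (a b c d p q : ℕ → ℝ) (n : ℕ) :
    Matrix (Fin n × Fin 2) (Fin n × Fin 2) ℝ :=
  Matrix.of fun is jt =>
    if (is.1 : ℕ) = (jt.1 : ℕ) then
      (!![a ((is.1 : ℕ) + 1), b ((is.1 : ℕ) + 1);
          c ((is.1 : ℕ) + 1), d ((is.1 : ℕ) + 1)]) is.2 jt.2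
    else if (jt.1 : ℕ) = (is.1 : ℕ) + 1 then p ((is.1 : ℕ) + 1)
    else if (is.1 : ℕ) = (jt.1 : ℕ) + 1 then q ((jt.1 : ℕ) + 1)
    else 0

noncomputable section
variable (a b c d p q : ℕ → ℝ)

def tt (i : ℕ) : ℝ := a i + d i - b i - c i

def ent (i j : ℕ) : ℝ :=
  if i = j then (if i % 2 = 0 then a (i/2+1) else tt a b c d (i/2+1))
  else if j = i+1 ∧ i % 2 = 0 then b (i/2+1) - a (i/2+1)
  else if i = j+1 ∧ j % 2 = 0 then c (j/2+1) - a (j/2+1)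
  else if j = i+2 ∧ i % 2 = 0 then p (i/2+1)
  else if i = j+2 ∧ j % 2 = 0 then q (j/2+1)
  else 0

def MM (m : ℕ) : Matrix (Fin m) (Fin m) ℝ :=
  Matrix.of fun i j => ent a b c d p q (i : ℕ) (j : ℕ)

lemma ent_zero {i j : ℕ} (h : ¬ (i = j ∨ (j = i+1 ∧ i%2=0) ∨ (i = j+1 ∧ j%2=0) ∨ (j = i+2 ∧ i%2=0) ∨ (i = j+2 ∧ j%2=0))) :
    ent a b c d p q i j = 0 := by
  unfold ent
  rw [if_neg (fun hh => h (Or.inl hh)),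
      if_neg (fun hh => h (Or.inr (Or.inl hh))),
      if_neg (fun hh => h (Or.inr (Or.inr (Or.inl hh)))),
      if_neg (fun hh => h (Or.inr (Or.inr (Or.inr (Or.inl hh))))),
      if_neg (fun hh => h (Or.inr (Or.inr (Or.inr (Or.inr hh)))))]

lemma ent_diag_even {i : ℕ} (h : i % 2 = 0) : ent a b c d p q i i = a (i/2+1) := by
  unfold ent; rw [if_pos rfl, if_pos h]

lemma ent_diag_odd {i : ℕ} (h : i % 2 = 1) : ent a b c d p q i i = tt a b c d (i/2+1) := by
  unfold ent; rw [if_pos rfl, if_neg (by omega)]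

lemma ent_sup {i : ℕ} (h : i % 2 = 0) : ent a b c d p q i (i+1) = b (i/2+1) - a (i/2+1) := by
  unfold ent; rw [if_neg (by omega), if_pos ⟨rfl, h⟩]

lemma ent_sub {j : ℕ} (h : j % 2 = 0) : ent a b c d p q (j+1) j = c (j/2+1) - a (j/2+1) := by
  unfold ent; rw [if_neg (by omega), if_neg (by omega), if_pos ⟨rfl, h⟩]

lemma ent_p {i : ℕ} (h : i % 2 = 0) : ent a b c d p q i (i+2) = p (i/2+1) := by
  unfold ent; rw [if_neg (by omega), if_neg (by omega), if_neg (by omega), if_pos ⟨rfl, h⟩]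

lemma ent_q {j : ℕ} (h : j % 2 = 0) : ent a b c d p q (j+2) j = q (j/2+1) := by
  unfold ent
  rw [if_neg (by omega), if_neg (by omega), if_neg (by omega), if_neg (by omega), if_pos ⟨rfl, h⟩]

lemma coe_succAbove {m : ℕ} (pv : Fin (m+1)) (j : Fin m) :
    ((pv.succAbove j : Fin (m+1)) : ℕ) = if (j:ℕ) < (pv:ℕ) then (j:ℕ) else (j:ℕ)+1 := by
  unfold Fin.succAbove
  split_ifs with h1 h2 h2 <;>
    simp_all [Fin.lt_def, Fin.coe_castSucc, Fin.val_succ]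

def KqM (k : ℕ) : Matrix (Fin (2*k+2)) (Fin (2*k+2)) ℝ :=
  Matrix.of fun i j => ent a b c d p q (i:ℕ) (if (j:ℕ) < 2*k then (j:ℕ) else (j:ℕ)+1)

def Kq2M (k : ℕ) : Matrix (Fin (2*k+1)) (Fin (2*k+1)) ℝ :=
  Matrix.of fun i j =>
    ent a b c d p q (if (i:ℕ) < 2*k then (i:ℕ) else (i:ℕ)+1) (if (j:ℕ) < 2*k then (j:ℕ) else (j:ℕ)+1)

def LM (k : ℕ) : Matrix (Fin (2*k+3)) (Fin (2*k+3)) ℝ :=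
  Matrix.of fun i j => ent a b c d p q (i:ℕ) (if (j:ℕ) < 2*k+2 then (j:ℕ) else (j:ℕ)+1)


lemma step2 (k : ℕ) : (MM a b c d p q (2*k+3)).det
    = a (k+2) * (MM a b c d p q (2*k+2)).det + q (k+1) * (KqM a b c d p q k).det := by
  have h2k : 2*k/2 = k := by omega
  have h2k2 : (2*k+2)/2 = k+1 := by omega
  rw [Matrix.det_succ_row (MM a b c d p q (2*k+3)) (Fin.last (2*k+2))]
  rw [← Finset.sum_subset
      (Finset.subset_univ ({⟨2*k, by omega⟩, Fin.last (2*k+2)} : Finset (Fin (2*k+3))))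
      (by
        intro x _ hx
        simp only [Finset.mem_insert, Finset.mem_singleton, not_or] at hx
        have h1 : (x:ℕ) ≠ 2*k := fun h => hx.1 (Fin.ext h)
        have h2 : (x:ℕ) ≠ 2*k+2 := fun h => hx.2 (Fin.ext h)
        have h3 : (x:ℕ) < 2*k+3 := x.isLt
        rw [show (MM a b c d p q (2*k+3)) (Fin.last (2*k+2)) x = 0 from ?_, mul_zero, zero_mul]
        show ent a b c d p q ((Fin.last (2*k+2)):ℕ) (x:ℕ) = 0
        rw [Fin.val_last]
        exact ent_zero a b c d p q (by omega))]
  rw [Finset.sum_pair (Fin.ne_of_val_ne (show 2*k ≠ 2*k+2 by omega))]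
  have e1 : (MM a b c d p q (2*k+3)) (Fin.last (2*k+2)) ⟨2*k, by omega⟩ = q (k+1) := by
    show ent a b c d p q (2*k+2) (2*k) = q (k+1)
    rw [ent_q a b c d p q (by omega), h2k]
  have e2 : (MM a b c d p q (2*k+3)) (Fin.last (2*k+2)) (Fin.last (2*k+2)) = a (k+2) := by
    show ent a b c d p q (2*k+2) (2*k+2) = a (k+2)
    rw [ent_diag_even a b c d p q (by omega), h2k2]
  have m1 : (MM a b c d p q (2*k+3)).submatrix (Fin.last (2*k+2)).succAbove
      ((⟨2*k, by omega⟩ : Fin (2*k+3)).succAbove) = KqM a b c d p q k := by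
    ext i j
    show ent a b c d p q _ _ = ent a b c d p q _ _
    simp only [Fin.succAbove_last, Fin.coe_castSucc, coe_succAbove]
  have m2 : (MM a b c d p q (2*k+3)).submatrix (Fin.last (2*k+2)).succAbove
      ((Fin.last (2*k+2)).succAbove) = MM a b c d p q (2*k+2) := by
    ext i j
    show ent a b c d p q _ _ = ent a b c d p q _ _
    simp only [Fin.succAbove_last, Fin.coe_castSucc]
  rw [e1, e2, m1, m2]
  have s1 : ((-1:ℝ)) ^ (((Fin.last (2*k+2)):ℕ) + ((⟨2*k, by omega⟩ : Fin (2*k+3)):ℕ)) = 1 := by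
    show ((-1:ℝ)) ^ ((2*k+2) + (2*k)) = 1
    exact Even.neg_one_pow ⟨2*k+1, by ring⟩
  have s2 : ((-1:ℝ)) ^ (((Fin.last (2*k+2)):ℕ) + ((Fin.last (2*k+2)):ℕ)) = 1 := by
    show ((-1:ℝ)) ^ ((2*k+2) + (2*k+2)) = 1
    exact Even.neg_one_pow ⟨2*k+2, by ring⟩
  rw [s1, s2]
  ring

lemma stepKq (k : ℕ) : (KqM a b c d p q k).det = -(p (k+1) * (Kq2M a b c d p q k).det) := by
  have h2k : 2*k/2 = k := by omega
  rw [Matrix.det_succ_column (KqM a b c d p q k) (Fin.last (2*k+1))]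
  rw [Finset.sum_eq_single_of_mem (⟨2*k, by omega⟩ : Fin (2*k+2)) (Finset.mem_univ _)
      (by
        intro x _ hx
        have h1 : (x:ℕ) ≠ 2*k := fun h => hx (Fin.ext h)
        have h3 : (x:ℕ) < 2*k+2 := x.isLt
        rw [show (KqM a b c d p q k) x (Fin.last (2*k+1)) = 0 from ?_, mul_zero, zero_mul]
        show ent a b c d p q (x:ℕ) (if ((Fin.last (2*k+1):ℕ)) < 2*k then ((Fin.last (2*k+1):ℕ)) else ((Fin.last (2*k+1):ℕ))+1) = 0
        rw [Fin.val_last, if_neg (by omega)]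
        exact ent_zero a b c d p q (by omega))]
  have e1 : (KqM a b c d p q k) ⟨2*k, by omega⟩ (Fin.last (2*k+1)) = p (k+1) := by
    show ent a b c d p q (2*k) (if ((Fin.last (2*k+1):ℕ)) < 2*k then ((Fin.last (2*k+1):ℕ)) else ((Fin.last (2*k+1):ℕ))+1) = p (k+1)
    rw [Fin.val_last, if_neg (by omega)]
    rw [show (2*k+1+1) = 2*k+2 from rfl, ent_p a b c d p q (by omega), h2k]
  have m1 : (KqM a b c d p q k).submatrix ((⟨2*k, by omega⟩ : Fin (2*k+2)).succAbove)
      (Fin.last (2*k+1)).succAbove = Kq2M a b c d p q k := by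
    ext i j
    simp only [Matrix.submatrix_apply, Fin.succAbove_last, KqM, Kq2M, Matrix.of_apply,
      coe_succAbove, Fin.coe_castSucc]
  have s1 : ((-1:ℝ)) ^ ((((⟨2*k, by omega⟩ : Fin (2*k+2))):ℕ) + ((Fin.last (2*k+1)):ℕ)) = -1 := by
    show ((-1:ℝ)) ^ ((2*k) + (2*k+1)) = -1
    exact Odd.neg_one_pow ⟨2*k, by ring⟩
  rw [e1, m1, s1]
  ring

lemma stepKq2 (k : ℕ) : (Kq2M a b c d p q k).det = tt a b c d (k+1) * (MM a b c d p q (2*k)).det := by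
  have h2k : (2*k+1)/2 = k := by omega
  rw [Matrix.det_succ_row (Kq2M a b c d p q k) (Fin.last (2*k))]
  rw [Finset.sum_eq_single_of_mem (Fin.last (2*k)) (Finset.mem_univ _)
      (by
        intro x _ hx
        have h1 : (x:ℕ) ≠ 2*k := fun h => hx (Fin.ext (by rw [h, Fin.val_last]))
        have h3 : (x:ℕ) < 2*k+1 := x.isLt
        rw [show (Kq2M a b c d p q k) (Fin.last (2*k)) x = 0 from ?_, mul_zero, zero_mul]
        show ent a b c d p q (if ((Fin.last (2*k):ℕ)) < 2*k then ((Fin.last (2*k):ℕ)) else ((Fin.last (2*k):ℕ))+1)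
          (if (x:ℕ) < 2*k then (x:ℕ) else (x:ℕ)+1) = 0
        rw [Fin.val_last, if_neg (by omega), if_pos (by omega)]
        exact ent_zero a b c d p q (by omega))]
  have e1 : (Kq2M a b c d p q k) (Fin.last (2*k)) (Fin.last (2*k)) = tt a b c d (k+1) := by
    show ent a b c d p q (if ((Fin.last (2*k):ℕ)) < 2*k then ((Fin.last (2*k):ℕ)) else ((Fin.last (2*k):ℕ))+1)
      (if ((Fin.last (2*k):ℕ)) < 2*k then ((Fin.last (2*k):ℕ)) else ((Fin.last (2*k):ℕ))+1) = tt a b c d (k+1)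
    rw [Fin.val_last, if_neg (by omega)]
    rw [ent_diag_odd a b c d p q (by omega), h2k]
  have m1 : (Kq2M a b c d p q k).submatrix (Fin.last (2*k)).succAbove (Fin.last (2*k)).succAbove
      = MM a b c d p q (2*k) := by
    ext i j
    simp only [Matrix.submatrix_apply, Fin.succAbove_last, Kq2M, MM, Matrix.of_apply,
      Fin.coe_castSucc]
    rw [if_pos i.isLt, if_pos j.isLt]
  have s1 : ((-1:ℝ)) ^ (((Fin.last (2*k)):ℕ) + ((Fin.last (2*k)):ℕ)) = 1 := by
    show ((-1:ℝ)) ^ ((2*k) + (2*k)) = 1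
    exact Even.neg_one_pow ⟨2*k, by ring⟩
  rw [e1, m1, s1]
  ring

lemma stepL (k : ℕ) : (LM a b c d p q k).det = (b (k+2) - a (k+2)) * (MM a b c d p q (2*k+2)).det := by
  have h2k : (2*k+2)/2 = k+1 := by omega
  rw [Matrix.det_succ_column (LM a b c d p q k) (Fin.last (2*k+2))]
  rw [Finset.sum_eq_single_of_mem (Fin.last (2*k+2)) (Finset.mem_univ _)
      (by
        intro x _ hx
        have h1 : (x:ℕ) ≠ 2*k+2 := fun h => hx (Fin.ext (by rw [h, Fin.val_last]))
        have h3 : (x:ℕ) < 2*k+3 := x.isLt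
        rw [show (LM a b c d p q k) x (Fin.last (2*k+2)) = 0 from ?_, mul_zero, zero_mul]
        show ent a b c d p q (x:ℕ)
          (if ((Fin.last (2*k+2):ℕ)) < 2*k+2 then ((Fin.last (2*k+2):ℕ)) else ((Fin.last (2*k+2):ℕ))+1) = 0
        rw [Fin.val_last, if_neg (by omega)]
        exact ent_zero a b c d p q (by omega))]
  have e1 : (LM a b c d p q k) (Fin.last (2*k+2)) (Fin.last (2*k+2)) = b (k+2) - a (k+2) := by
    show ent a b c d p q ((Fin.last (2*k+2)):ℕ)
      (if ((Fin.last (2*k+2):ℕ)) < 2*k+2 then ((Fin.last (2*k+2):ℕ)) else ((Fin.last (2*k+2):ℕ))+1) = b (k+2) - a (k+2)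
    rw [Fin.val_last, if_neg (by omega)]
    rw [show (2*k+2+1) = (2*k+2)+1 from rfl, ent_sup a b c d p q (by omega), h2k]
  have m1 : (LM a b c d p q k).submatrix (Fin.last (2*k+2)).succAbove (Fin.last (2*k+2)).succAbove
      = MM a b c d p q (2*k+2) := by
    ext i j
    simp only [Matrix.submatrix_apply, Fin.succAbove_last, LM, MM, Matrix.of_apply,
      Fin.coe_castSucc]
    rw [if_pos (by omega : (j:ℕ) < 2*k+2)]
  have s1 : ((-1:ℝ)) ^ (((Fin.last (2*k+2)):ℕ) + ((Fin.last (2*k+2)):ℕ)) = 1 := by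
    show ((-1:ℝ)) ^ ((2*k+2) + (2*k+2)) = 1
    exact Even.neg_one_pow ⟨2*k+2, by ring⟩
  rw [e1, m1, s1]
  ring

lemma step1 (k : ℕ) : (MM a b c d p q (2*k+4)).det
    = tt a b c d (k+2) * (MM a b c d p q (2*k+3)).det
      - (c (k+2) - a (k+2)) * (LM a b c d p q k).det := by
  have h2k : (2*k+2)/2 = k+1 := by omega
  have h2k3 : (2*k+3)/2 = k+1 := by omega
  rw [Matrix.det_succ_row (MM a b c d p q (2*k+4)) (Fin.last (2*k+3))]
  rw [← Finset.sum_subset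
      (Finset.subset_univ ({⟨2*k+2, by omega⟩, Fin.last (2*k+3)} : Finset (Fin (2*k+4))))
      (by
        intro x _ hx
        simp only [Finset.mem_insert, Finset.mem_singleton, not_or] at hx
        have h1 : (x:ℕ) ≠ 2*k+2 := fun h => hx.1 (Fin.ext h)
        have h2 : (x:ℕ) ≠ 2*k+3 := fun h => hx.2 (Fin.ext h)
        have h3 : (x:ℕ) < 2*k+4 := x.isLt
        rw [show (MM a b c d p q (2*k+4)) (Fin.last (2*k+3)) x = 0 from ?_, mul_zero, zero_mul]
        show ent a b c d p q ((Fin.last (2*k+3)):ℕ) (x:ℕ) = 0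
        rw [Fin.val_last]
        exact ent_zero a b c d p q (by omega))]
  rw [Finset.sum_pair (Fin.ne_of_val_ne (show 2*k+2 ≠ 2*k+3 by omega))]
  have e1 : (MM a b c d p q (2*k+4)) (Fin.last (2*k+3)) ⟨2*k+2, by omega⟩ = c (k+2) - a (k+2) := by
    show ent a b c d p q (2*k+3) (2*k+2) = c (k+2) - a (k+2)
    rw [show (2*k+3) = (2*k+2)+1 from rfl, ent_sub a b c d p q (by omega), h2k]
  have e2 : (MM a b c d p q (2*k+4)) (Fin.last (2*k+3)) (Fin.last (2*k+3)) = tt a b c d (k+2) := by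
    show ent a b c d p q (2*k+3) (2*k+3) = tt a b c d (k+2)
    rw [ent_diag_odd a b c d p q (by omega), h2k3]
  have m1 : (MM a b c d p q (2*k+4)).submatrix (Fin.last (2*k+3)).succAbove
      ((⟨2*k+2, by omega⟩ : Fin (2*k+4)).succAbove) = LM a b c d p q k := by
    ext i j
    simp only [Matrix.submatrix_apply, Fin.succAbove_last, MM, LM, Matrix.of_apply,
      coe_succAbove, Fin.coe_castSucc]
  have m2 : (MM a b c d p q (2*k+4)).submatrix (Fin.last (2*k+3)).succAbove
      ((Fin.last (2*k+3)).succAbove) = MM a b c d p q (2*k+3) := by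
    ext i j
    simp only [Matrix.submatrix_apply, Fin.succAbove_last, MM, Matrix.of_apply, Fin.coe_castSucc]
  rw [e1, e2, m1, m2]
  have s1 : ((-1:ℝ)) ^ (((Fin.last (2*k+3)):ℕ) + (((⟨2*k+2, by omega⟩ : Fin (2*k+4))):ℕ)) = -1 := by
    show ((-1:ℝ)) ^ ((2*k+3) + (2*k+2)) = -1
    exact Odd.neg_one_pow ⟨2*k+2, by ring⟩
  have s2 : ((-1:ℝ)) ^ (((Fin.last (2*k+3)):ℕ) + ((Fin.last (2*k+3)):ℕ)) = 1 := by
    show ((-1:ℝ)) ^ ((2*k+3) + (2*k+3)) = 1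
    exact Even.neg_one_pow ⟨2*k+3, by ring⟩
  rw [s1, s2]
  ring

lemma recMM (k : ℕ) : (MM a b c d p q (2*k+4)).det
    = (a (k+2) * d (k+2) - b (k+2) * c (k+2)) * (MM a b c d p q (2*k+2)).det
      - p (k+1) * q (k+1) * tt a b c d (k+2) * tt a b c d (k+1) * (MM a b c d p q (2*k)).det := by
  rw [step1, step2, stepKq, stepKq2, stepL]
  simp only [tt]
  ring

lemma MM0det : (MM a b c d p q 0).det = 1 := Matrix.det_fin_zero

lemma MM2det : (MM a b c d p q 2).det = a 1 * d 1 - b 1 * c 1 := by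
  rw [Matrix.det_fin_two]
  show ent a b c d p q 0 0 * ent a b c d p q 1 1
      - ent a b c d p q 0 1 * ent a b c d p q 1 0 = _
  norm_num [ent, tt]
  ring

def PP (n : ℕ) : Matrix (Fin n × Fin 2) (Fin n × Fin 2) ℝ :=
  Matrix.of fun x y => if x.1 = y.1 then !![(1:ℝ),0;-1,1] x.2 y.2 else 0

def QQ (n : ℕ) : Matrix (Fin n × Fin 2) (Fin n × Fin 2) ℝ :=
  Matrix.of fun x y => if x.1 = y.1 then !![(1:ℝ),-1;0,1] x.2 y.2 else 0

lemma detPP (n : ℕ) : (PP n).det = 1 := by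
  have h : PP n = (Matrix.blockDiagonal (fun _ : Fin n => !![(1:ℝ),0;-1,1])).submatrix
      (Equiv.prodComm (Fin n) (Fin 2)) (Equiv.prodComm (Fin n) (Fin 2)) := by
    ext x y
    by_cases hxy : x.1 = y.1 <;>
      simp [PP, Matrix.blockDiagonal_apply, hxy]
  rw [h, Matrix.det_submatrix_equiv_self, Matrix.det_blockDiagonal]
  simp [Matrix.det_fin_two_of]

lemma detQQ (n : ℕ) : (QQ n).det = 1 := by
  have h : QQ n = (Matrix.blockDiagonal (fun _ : Fin n => !![(1:ℝ),-1;0,1])).submatrix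
      (Equiv.prodComm (Fin n) (Fin 2)) (Equiv.prodComm (Fin n) (Fin 2)) := by
    ext x y
    by_cases hxy : x.1 = y.1 <;>
      simp [QQ, Matrix.blockDiagonal_apply, hxy]
  rw [h, Matrix.det_submatrix_equiv_self, Matrix.det_blockDiagonal]
  simp [Matrix.det_fin_two_of]

def eEquiv (n : ℕ) : Fin n × Fin 2 ≃ Fin (2*n) where
  toFun x := ⟨2*(x.1:ℕ) + (x.2:ℕ), by have := x.1.isLt; have := x.2.isLt; omega⟩
  invFun k := (⟨(k:ℕ)/2, by have := k.isLt; omega⟩, ⟨(k:ℕ)%2, by omega⟩)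
  left_inv := by
    rintro ⟨i, r⟩
    have hr := r.isLt
    refine Prod.ext (Fin.ext ?_) (Fin.ext ?_) <;> (simp; try omega)
  right_inv := by
    intro k
    have := k.isLt
    refine Fin.ext ?_
    simp
    try omega

lemma PP_mul (n : ℕ) (X : Matrix (Fin n × Fin 2) (Fin n × Fin 2) ℝ) (x y : Fin n × Fin 2) :
    (PP n * X) x y
      = !![(1:ℝ),0;-1,1] x.2 0 * X (x.1, 0) y + !![(1:ℝ),0;-1,1] x.2 1 * X (x.1, 1) y := by
  rw [Matrix.mul_apply, Fintype.sum_prod_type]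
  rw [Finset.sum_eq_single_of_mem x.1 (Finset.mem_univ _)
      (fun k _ hk => Finset.sum_eq_zero (fun u _ => by simp [PP, Ne.symm hk]))]
  rw [Fin.sum_univ_two]
  simp [PP]

lemma mul_QQ (n : ℕ) (X : Matrix (Fin n × Fin 2) (Fin n × Fin 2) ℝ) (x y : Fin n × Fin 2) :
    (X * QQ n) x y
      = X x (y.1, 0) * !![(1:ℝ),-1;0,1] 0 y.2 + X x (y.1, 1) * !![(1:ℝ),-1;0,1] 1 y.2 := by
  rw [Matrix.mul_apply, Fintype.sum_prod_type]
  rw [Finset.sum_eq_single_of_mem y.1 (Finset.mem_univ _)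
      (fun k _ hk => Finset.sum_eq_zero (fun u _ => by simp [QQ, hk]))]
  rw [Fin.sum_univ_two]
  simp [QQ]

lemma ent00 (i : ℕ) : ent a b c d p q (2*i) (2*i) = a (i+1) := by
  have h : 2*i/2 = i := by omega
  rw [ent_diag_even a b c d p q (by omega), h]

lemma ent01 (i : ℕ) : ent a b c d p q (2*i) (2*i+1) = b (i+1) - a (i+1) := by
  have h : 2*i/2 = i := by omega
  rw [ent_sup a b c d p q (by omega), h]

lemma ent10 (i : ℕ) : ent a b c d p q (2*i+1) (2*i) = c (i+1) - a (i+1) := by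
  have h : 2*i/2 = i := by omega
  rw [ent_sub a b c d p q (by omega), h]

lemma ent11 (i : ℕ) : ent a b c d p q (2*i+1) (2*i+1) = tt a b c d (i+1) := by
  have h : (2*i+1)/2 = i := by omega
  rw [ent_diag_odd a b c d p q (by omega), h]

lemma entP (i : ℕ) : ent a b c d p q (2*i) (2*i+2) = p (i+1) := by
  have h : 2*i/2 = i := by omega
  rw [ent_p a b c d p q (by omega), h]

lemma entQ (j : ℕ) : ent a b c d p q (2*j+2) (2*j) = q (j+1) := by
  have h : 2*j/2 = j := by omega
  rw [ent_q a b c d p q (by omega), h]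

lemma conj (n : ℕ) :
    PP n * blockTridiag a b c d p q n * QQ n
      = (MM a b c d p q (2*n)).submatrix (eEquiv n) (eEquiv n) := by
  ext x y
  obtain ⟨i, r⟩ := x
  obtain ⟨j, s⟩ := y
  rw [Matrix.mul_assoc, PP_mul, mul_QQ, mul_QQ]
  have hsub : (MM a b c d p q (2*n)).submatrix (eEquiv n) (eEquiv n) (i,r) (j,s)
      = ent a b c d p q (2*(i:ℕ)+(r:ℕ)) (2*(j:ℕ)+(s:ℕ)) := rfl
  rw [hsub]
  by_cases h1 : (i:ℕ) = (j:ℕ)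
  · fin_cases r <;> fin_cases s <;>
      simp [blockTridiag, if_pos h1, ← h1, ent00, ent01, ent10, ent11, tt] <;> ring
  · by_cases h2 : (j:ℕ) = (i:ℕ)+1
    · have hj : 2*(j:ℕ) = 2*(i:ℕ)+2 := by omega
      fin_cases r <;> fin_cases s <;>
        simp [blockTridiag, if_neg h1, if_pos h2, if_neg (by omega : ¬(i:ℕ) = (j:ℕ)+1), hj, entP]
      all_goals first
        | ring1
        | (exact (ent_zero a b c d p q (by omega)).symm)
        | (exact ent_zero a b c d p q (by omega))
    · by_cases h3 : (i:ℕ) = (j:ℕ)+1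
      · have hi : 2*(i:ℕ) = 2*(j:ℕ)+2 := by omega
        fin_cases r <;> fin_cases s <;>
          simp [blockTridiag, if_neg h1, if_neg h2, if_pos h3, hi, entQ]
        all_goals first
          | ring1
          | (exact (ent_zero a b c d p q (by omega)).symm)
          | (exact ent_zero a b c d p q (by omega))
      · fin_cases r <;> fin_cases s <;>
          simp [blockTridiag, if_neg h1, if_neg h2, if_neg h3]
        all_goals first
          | (exact (ent_zero a b c d p q (by omega)).symm)
          | (exact ent_zero a b c d p q (by omega))

lemma detT_eq (n : ℕ) :
    (blockTridiag a b c d p q n).det = (MM a b c d p q (2*n)).det := by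
  have h := congrArg Matrix.det (conj a b c d p q n)
  rw [Matrix.det_mul, Matrix.det_mul, detPP, detQQ, one_mul, mul_one,
    Matrix.det_submatrix_equiv_self] at h
  exact h

end

theorem stmt_6 (a b c d p q : ℕ → ℝ)
    (hinv : ∀ i, 1 ≤ i → IsUnit (a i * d i - b i * c i))
    (g : ℕ → ℝ) (hg : ∀ n, g n = (blockTridiag a b c d p q n).det)
    (t : ℕ → ℝ) (ht : ∀ i, t i = a i + d i - b i - c i) :
    g 1 = a 1 * d 1 - b 1 * c 1 ∧
    g 2 = (a 1 * d 1 - b 1 * c 1) * (a 2 * d 2 - b 2 * c 2) - p 1 * q 1 * t 1 * t 2 ∧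
    ∀ n, 3 ≤ n →
      g n = (a n * d n - b n * c n) * g (n-1)
              - p (n-1) * q (n-1) * t n * t (n-1) * g (n-2) := by
  have htt : ∀ i, tt a b c d i = t i := by
    intro i; rw [ht i]; rfl
  have hgM : ∀ n, g n = (MM a b c d p q (2*n)).det := by
    intro n; rw [hg n, detT_eq]
  refine ⟨?_, ?_, ?_⟩
  · rw [hgM 1]
    exact MM2det a b c d p q
  · rw [hgM 2]
    have h4 := recMM a b c d p q 0
    norm_num at h4
    rw [show (2*2) = 4 from rfl, h4, MM2det, MM0det, htt, htt]
    ring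
  · intro n hn
    obtain ⟨m, rfl⟩ : ∃ m, n = m + 3 := ⟨n - 3, by omega⟩
    have h := recMM a b c d p q (m+1)
    rw [hgM (m+3), hgM (m+3-1), hgM (m+3-2)]
    rw [show 2*(m+3) = 2*(m+1)+4 from by ring,
      show 2*(m+3-1) = 2*(m+1)+2 from by omega,
      show 2*(m+3-2) = 2*(m+1) from by omega, h, htt, htt]
    norm_num [show m+1+2 = m+3 from rfl, show m+1+1 = m+2 from rfl, show m+3-1 = m+2 from rfl,
      show m+3-2 = m+1 from rfl]
end

section
/- Let T_n be the 2n×2n block tridiagonal matrix with symmetric 2×2 diagonal blocks A_i = [[a_i, b_i],[b_i, a_i]], superdiagonal blocks p_i·J_2 and subdiagonal blocks q_i·J_2. Then det T_n = h̃_n · ∏_{i=1}^n (a_i − b_i), where h̃_n is the determinant of the n×n tridiagonal matrix with diagonal entries a_i + b_i, superdiagonal 2p_i, and subdiagonal 2q_i. -/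
/-- The `n × n` tridiagonal matrix with diagonal `a 1, …, a n`,
superdiagonal `p 1, …, p (n-1)` and subdiagonal `q 1, …, q (n-1)`. -/
def tridiag (a p q : ℕ → ℝ) (n : ℕ) : Matrix (Fin n) (Fin n) ℝ :=
  Matrix.of fun i j =>
    if (i : ℕ) = (j : ℕ) then a (i + 1)
    else if (j : ℕ) = (i : ℕ) + 1 then p ((i : ℕ) + 1)
    else if (i : ℕ) = (j : ℕ) + 1 then q ((j : ℕ) + 1)
    else 0

/-- The `2n × 2n` block tridiagonal matrix with symmetric `2 × 2` diagonal blocks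
`A_i = !![a i, b i; b i, a i]`, superdiagonal blocks `p i • J₂` and
subdiagonal blocks `q i • J₂`. -/
def blockTridiagSym (a b p q : ℕ → ℝ) (n : ℕ) :
    Matrix (Fin n × Fin 2) (Fin n × Fin 2) ℝ :=
  Matrix.of fun is jt =>
    if (is.1 : ℕ) = (jt.1 : ℕ) then
      (!![a ((is.1 : ℕ) + 1), b ((is.1 : ℕ) + 1);
          b ((is.1 : ℕ) + 1), a ((is.1 : ℕ) + 1)]) is.2 jt.2
    else if (jt.1 : ℕ) = (is.1 : ℕ) + 1 then p ((is.1 : ℕ) + 1)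
    else if (is.1 : ℕ) = (jt.1 : ℕ) + 1 then q ((jt.1 : ℕ) + 1)
    else 0

/-!
In the basis ordering `(i, s)`, the matrix is `M ⊗ I₂ + N ⊗ σ` with `M = tridiag a p q`,
`N = tridiag b p q` and `σ` the swap `!![0, 1; 1, 0]` (each `p i • J₂` is `p i • (I₂ + σ)`).
Conjugating by `I ⊗ H`, `H = !![1, 1; 1, -1]`, diagonalises `σ` and gives the two blocks `M + N`
(tridiagonal with entries `a + b`, `2p`, `2q`) and `M - N = diag (a - b)`.
-/

open Matrix Kronecker

section PairedBlocks

variable {ι R : Type*} [Fintype ι] [DecidableEq ι] [CommRing R]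

lemma conj_kronecker_add_kronecker_swap (M N : Matrix ι ι R) :
    (1 ⊗ₖ !![1, 1; 1, -1]) * (M ⊗ₖ 1 + N ⊗ₖ !![0, 1; 1, 0]) * (1 ⊗ₖ !![1, 1; 1, -1])
      = (2 : R) • blockDiagonal ![M + N, M - N] := by
  simp only [mul_add, add_mul, ← mul_kronecker_mul, one_mul, mul_one, mul_fin_two]
  ext ⟨i, s⟩ ⟨j, t⟩
  fin_cases s <;> fin_cases t <;> simp [blockDiagonal_apply] <;> ring

lemma det_kronecker_add_kronecker_swap [IsDomain R] [NeZero (2 : R)] (M N : Matrix ι ι R) :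
    (M ⊗ₖ 1 + N ⊗ₖ !![0, 1; 1, 0]).det = (M + N).det * (M - N).det := by
  have hS : ((1 : Matrix ι ι R) ⊗ₖ !![1, 1; 1, -1]).det = (-2) ^ Fintype.card ι := by
    rw [det_kronecker, det_fin_two_of]
    norm_num
  have h := congrArg det (conj_kronecker_add_kronecker_swap M N)
  rw [det_mul, det_mul, hS, det_smul, det_blockDiagonal, Fin.prod_univ_two] at h
  rw [mul_right_comm, ← mul_pow, neg_mul_neg, ← sq, Fintype.card_prod, Fintype.card_fin,
    pow_mul'] at h
  exact mul_left_cancel₀ (pow_ne_zero _ (pow_ne_zero _ two_ne_zero)) h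

end PairedBlocks

lemma blockTridiagSym_eq_kronecker (a b p q : ℕ → ℝ) (n : ℕ) :
    blockTridiagSym a b p q n
      = tridiag a p q n ⊗ₖ 1 + tridiag b p q n ⊗ₖ !![0, 1; 1, 0] := by
  ext ⟨i, s⟩ ⟨j, t⟩
  fin_cases s <;> fin_cases t <;> simp [blockTridiagSym, tridiag]

lemma tridiag_add (a p q a' p' q' : ℕ → ℝ) (n : ℕ) :
    tridiag a p q n + tridiag a' p' q' n = tridiag (a + a') (p + p') (q + q') n := by
  ext i j
  simp only [tridiag, Matrix.add_apply, of_apply, Pi.add_apply]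
  split_ifs <;> ring

lemma tridiag_sub (a p q a' p' q' : ℕ → ℝ) (n : ℕ) :
    tridiag a p q n - tridiag a' p' q' n = tridiag (a - a') (p - p') (q - q') n := by
  ext i j
  simp only [tridiag, Matrix.sub_apply, of_apply, Pi.sub_apply]
  split_ifs <;> ring

lemma det_tridiag_zero_zero (d : ℕ → ℝ) (n : ℕ) :
    (tridiag d 0 0 n).det = ∏ i ∈ Finset.Icc 1 n, d i := by
  have hdiag : tridiag d 0 0 n = diagonal fun i : Fin n => d (i + 1) := by
    ext i j
    simp only [tridiag, diagonal_apply, of_apply, Pi.zero_apply, Fin.ext_iff]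
    split_ifs <;> simp_all
  rw [hdiag, det_diagonal, Fin.prod_univ_eq_prod_range (fun i => d (i + 1)), Finset.range_eq_Ico,
    Finset.prod_Ico_add', zero_add]
  rfl

theorem stmt_7 (a b p q : ℕ → ℝ) (n : ℕ) :
    (blockTridiagSym a b p q n).det
      = (tridiag (fun i => a i + b i) (fun i => 2 * p i) (fun i => 2 * q i) n).det
          * ∏ i ∈ Finset.Icc 1 n, (a i - b i) := by
  rw [blockTridiagSym_eq_kronecker, det_kronecker_add_kronecker_swap, tridiag_add, tridiag_sub,
    sub_self, sub_self, det_tridiag_zero_zero]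
  congr 3 <;> funext i <;> simp only [Pi.add_apply] <;> ring
end

section
/- Let P_n be the weighted path graph on n vertices whose k-th edge (between vertices k and k+1) has resistance r_k = 1/2^{k-1}. Then the Kirchhoff index of P_n, i.e., the sum over all pairs of vertices of the resistance distance (which for a path equals the sum of edge resistances along the path between them), equals 4n − 12 + (n+3)/2^{n-2} for n ≥ 2. -/
/-!
Induction on `n`: adding vertex `n + 1` adds the distances `R(i, n + 1) = ∑_{k=i}^{n} r_k`, whose sum
over `i` is `∑_{k=1}^{n} k r_k = ∑_{k=1}^{n} k / 2^{k-1} = 4 - 2(n + 2) / 2^n` (edge `k` lies on the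
paths from the `k` vertices `1, …, k`).
-/

open Finset

theorem sum_Icc_pairs_succ {M : Type*} [AddCommMonoid M] (f : ℕ → ℕ → M) (n : ℕ) :
    ∑ i ∈ Icc 1 (n + 1), ∑ j ∈ Icc (i + 1) (n + 1), f i j
      = ∑ i ∈ Icc 1 n, ∑ j ∈ Icc (i + 1) n, f i j + ∑ i ∈ Icc 1 n, f i (n + 1) := by
  have hsplit : ∀ i ∈ Icc 1 n,
      ∑ j ∈ Icc (i + 1) (n + 1), f i j = ∑ j ∈ Icc (i + 1) n, f i j + f i (n + 1) := by
    intro i hi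
    exact sum_Icc_succ_top (by simp at hi; omega) _
  rw [sum_Icc_succ_top (by omega), sum_congr rfl hsplit, sum_add_distrib,
    Icc_eq_empty (show ¬n + 1 + 1 ≤ n + 1 by omega), sum_empty, add_zero]

theorem sum_Icc_sum_Icc_eq_sum_nsmul {M : Type*} [AddCommMonoid M] (r : ℕ → M) (n : ℕ) :
    ∑ i ∈ Icc 1 n, ∑ k ∈ Icc i n, r k = ∑ k ∈ Icc 1 n, k • r k := by
  rw [sum_comm' (t' := Icc 1 n) (s' := fun k => Icc 1 k)
    (by intro i k; simp only [mem_Icc]; omega)]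
  simp

theorem sum_Icc_div_two_pow (n : ℕ) :
    ∑ k ∈ Icc 1 n, (k : ℝ) / 2 ^ (k - 1) = 4 - 2 * (n + 2) / 2 ^ n := by
  induction n with
  | zero => norm_num
  | succ n ih =>
    rw [sum_Icc_succ_top (by omega), ih, Nat.add_sub_cancel, pow_succ]
    push_cast
    field_simp
    ring

theorem stmt_12 (n : ℕ) (hn : 2 ≤ n) :
    ∑ i ∈ Finset.Icc 1 n, ∑ j ∈ Finset.Icc (i+1) n,
        (∑ k ∈ Finset.Icc i (j-1), (1 : ℝ) / 2 ^ (k - 1))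
      = 4 * n - 12 + ((n : ℝ) + 3) / 2 ^ (n - 2) := by
  induction n, hn using Nat.le_induction with
  | base => norm_num [show Icc 1 2 = {1, 2} by decide]
  | succ n hn ih =>
    have hnew : ∑ i ∈ Icc 1 n, ∑ k ∈ Icc i (n + 1 - 1), (1 : ℝ) / 2 ^ (k - 1)
        = 4 - 2 * (n + 2) / 2 ^ n := by
      simp only [Nat.add_sub_cancel, sum_Icc_sum_Icc_eq_sum_nsmul, nsmul_eq_mul, mul_one_div,
        sum_Icc_div_two_pow]
    obtain ⟨m, rfl⟩ : ∃ m, n = m + 2 := ⟨n - 2, by omega⟩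
    rw [sum_Icc_pairs_succ, ih, hnew, show m + 2 + 1 - 2 = m + 1 by omega, Nat.add_sub_cancel]
    push_cast
    field_simp
    ring
end
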